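/- Let R ⊆ A be the ℚ-linear span of all elements h^l_n(w) − w where w ranges over monomials and 2 ≤ n ≤ len(w). Then for any monomials w_1, w_2 of lengths n_1, n_2 ≥ 1, the element w_1·η(w_2) − (−1)^{n_1+n_2−1}·w_2·η(w_1) lies in R. -/

import Mathlib

/-!
Write `D(w₁, w₂) = w₁·η(w₂) − (−1)^{n₁+n₂−1}·w₂·η(w₁)`. For a single letter `w₂ = a`,
`−D(w₁, a)` is itself the relation `h^l_{n₁+1}(w₁a) − w₁a`. Expanding `η(la) = a·η(l) − η(l)·a`
gives `D(w₁, la) = D(w₁a, l) − D(w₁, l)·a`, and the relations are stable under right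
multiplication by monomials, because `h^l_n(wm) = h^l_n(w)·m` for `n ≤ len w`.
Induction on `w₂` from the right concludes.
-/

noncomputable section

abbrev FA (k : Type*) [Field k] (p : ℕ) := MonoidAlgebra k (FreeMonoid (Fin p))

def mon (k : Type*) [Field k] {p : ℕ} (l : List (Fin p)) : FA k p :=
  MonoidAlgebra.of k (FreeMonoid (Fin p)) (FreeMonoid.ofList l)

def etaRev (k : Type*) [Field k] {p : ℕ} : List (Fin p) → FA k p
  | [] => 0
  | [a] => mon k [a]
  | a :: b :: l => mon k [a] * etaRev k (b :: l) - etaRev k (b :: l) * mon k [a]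

def etaList (k : Type*) [Field k] {p : ℕ} (l : List (Fin p)) : FA k p :=
  etaRev k l.reverse

def etaLin (k : Type*) [Field k] (p : ℕ) : FA k p →ₗ[k] FA k p :=
  (Finsupp.lift (FA k p) k (FreeMonoid (Fin p)) (fun w => etaList k (FreeMonoid.toList w))).comp
    (MonoidAlgebra.coeffLinearEquiv k).toLinearMap

/-- The fold move `h^l_n` on a monomial (word). -/
def hl (k : Type*) [Field k] {p : ℕ} (n : ℕ) (l : List (Fin p)) : FA k p :=
  if 2 ≤ n ∧ n ≤ l.length then
    ((-1 : k) ^ (n - 1)) •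
      (mon k ((l.drop (n - 1)).take 1) * etaList k (l.take (n - 1)) * mon k (l.drop n))
  else mon k l

def hlLin (k : Type*) [Field k] (p n : ℕ) : FA k p →ₗ[k] FA k p :=
  (Finsupp.lift (FA k p) k (FreeMonoid (Fin p)) (fun w => hl k n (FreeMonoid.toList w))).comp
    (MonoidAlgebra.coeffLinearEquiv k).toLinearMap

/-- The span of the `H^l` relations `h^l_n(w) - w`. -/
def Rspan (k : Type*) [Field k] (p : ℕ) : Submodule k (FA k p) :=
  Submodule.span k
    {x | ∃ (l : List (Fin p)) (n : ℕ), 2 ≤ n ∧ n ≤ l.length ∧ x = hl k n l - mon k l}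

variable {k : Type*} [Field k] {p : ℕ}

lemma mon_nil : mon k ([] : List (Fin p)) = 1 := rfl

lemma mon_append (l₁ l₂ : List (Fin p)) : mon k (l₁ ++ l₂) = mon k l₁ * mon k l₂ := by
  simp [mon]

lemma etaList_singleton (a : Fin p) : etaList k [a] = mon k [a] := rfl

lemma etaList_append_singleton {l : List (Fin p)} (hl : l ≠ []) (a : Fin p) :
    etaList k (l ++ [a]) = mon k [a] * etaList k l - etaList k l * mon k [a] := by
  obtain ⟨b, t, hbt⟩ := List.exists_cons_of_ne_nil (List.reverse_ne_nil_iff.mpr hl)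
  simp only [etaList, List.reverse_append, List.reverse_singleton, List.singleton_append, hbt,
    etaRev]

lemma hl_append {n : ℕ} {l : List (Fin p)} (h2 : 2 ≤ n) (hn : n ≤ l.length) (m : List (Fin p)) :
    hl k n (l ++ m) = hl k n l * mon k m := by
  rw [hl, hl, if_pos ⟨h2, by simp; omega⟩, if_pos ⟨h2, hn⟩,
    List.drop_append_of_le_length (show n - 1 ≤ l.length by omega),
    List.drop_append_of_le_length hn,
    List.take_append_of_le_length (show n - 1 ≤ l.length by omega),
    List.take_append_of_le_length (by simp; omega), mon_append, smul_mul_assoc, mul_assoc,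
    mul_assoc, mul_assoc]

lemma hl_length_succ_append_singleton (w : List (Fin p)) (hw : 1 ≤ w.length) (a : Fin p) :
    hl k (w.length + 1) (w ++ [a]) = (-1 : k) ^ w.length • (mon k [a] * etaList k w) := by
  rw [hl, if_pos ⟨by omega, by simp⟩]
  simp [mon_nil]

lemma hl_sub_mon_mem_Rspan {n : ℕ} {l : List (Fin p)} (h2 : 2 ≤ n) (hn : n ≤ l.length) :
    hl k n l - mon k l ∈ Rspan k p :=
  Submodule.subset_span ⟨l, n, h2, hn, rfl⟩

lemma mul_mon_mem_Rspan {x : FA k p} (hx : x ∈ Rspan k p) (m : List (Fin p)) :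
    x * mon k m ∈ Rspan k p := by
  induction hx using Submodule.span_induction with
  | mem y hy =>
    obtain ⟨l, n, h2, hn, rfl⟩ := hy
    rw [sub_mul, ← hl_append h2 hn, ← mon_append]
    exact hl_sub_mon_mem_Rspan h2 (by simp; omega)
  | zero => simp
  | add a b _ _ ha hb => rw [add_mul]; exact add_mem ha hb
  | smul c a _ ha => rw [smul_mul_assoc]; exact Submodule.smul_mem _ _ ha

def headDefect (k : Type*) [Field k] {p : ℕ} (w₁ w₂ : List (Fin p)) : FA k p :=
  mon k w₁ * etaList k w₂ -
    ((-1 : k) ^ (w₁.length + w₂.length - 1)) • (mon k w₂ * etaList k w₁)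

lemma headDefect_singleton (w : List (Fin p)) (hw : 1 ≤ w.length) (a : Fin p) :
    headDefect k w [a] = -(hl k (w.length + 1) (w ++ [a]) - mon k (w ++ [a])) := by
  rw [headDefect, hl_length_succ_append_singleton w hw, mon_append, etaList_singleton,
    List.length_singleton, Nat.add_sub_cancel, neg_sub]

lemma headDefect_append_singleton {w l : List (Fin p)} (hw : w ≠ []) (hl : l ≠ []) (a : Fin p) :
    headDefect k w (l ++ [a]) = headDefect k (w ++ [a]) l - headDefect k w l * mon k [a] := by
  have hpos : 0 < w.length := List.length_pos_iff.mpr hw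
  obtain ⟨s, hs⟩ : ∃ s, w.length + l.length = s + 1 := ⟨w.length + l.length - 1, by omega⟩
  simp only [headDefect, etaList_append_singleton hw, etaList_append_singleton hl, mon_append,
    List.length_append, List.length_singleton,
    show w.length + (l.length + 1) - 1 = s + 1 by omega,
    show w.length + 1 + l.length - 1 = s + 1 by omega, hs, Nat.add_sub_cancel, pow_succ,
    mul_neg_one, neg_smul]
  simp only [smul_sub, mul_sub, sub_mul, smul_mul_assoc, mul_assoc]
  abel

theorem headDefect_mem_Rspan (w₁ w₂ : List (Fin p)) (h₁ : 1 ≤ w₁.length) (h₂ : 1 ≤ w₂.length) :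
    headDefect k w₁ w₂ ∈ Rspan k p := by
  induction w₂ using List.reverseRecOn generalizing w₁ with
  | nil => simp at h₂
  | append_singleton l a ih =>
    rcases eq_or_ne l [] with rfl | hl
    · rw [List.nil_append, headDefect_singleton w₁ h₁]
      exact neg_mem (hl_sub_mon_mem_Rspan (by omega) (by simp))
    · have hl' : 1 ≤ l.length := List.length_pos_iff.mpr hl
      rw [headDefect_append_singleton (List.length_pos_iff.mp h₁) hl]
      exact sub_mem (ih _ (by simp) hl') (mul_mon_mem_Rspan (ih w₁ h₁ hl') [a])

/-- Head independence: w₁·η(w₂) − (−1)^{n₁+n₂−1}·w₂·η(w₁) lies in the span R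
of the relations h^l_n(w) − w. -/
theorem head_independence {p : ℕ} (w₁ w₂ : List (Fin p))
    (h₁ : 1 ≤ w₁.length) (h₂ : 1 ≤ w₂.length) :
    mon ℚ w₁ * etaList ℚ w₂ -
      ((-1 : ℚ) ^ (w₁.length + w₂.length - 1)) • (mon ℚ w₂ * etaList ℚ w₁) ∈ Rspan ℚ p :=
  headDefect_mem_Rspan w₁ w₂ h₁ h₂
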